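/- Let a = (a_1, …, a_r) with all a_i ≥ 2 integers, let k = (k_1, …, k_r) ∈ ℕ^r be admissible with Z_r(k_1, …, k_r) = 0 and k_i ≤ a_i for all i, and fix j ∈ {1, …, r}. In the fraction field of ℤ[t, x, y], define ζ_0 := x^{Z_{j-1}(k_1,…,k_{j-1})}·y^{Z_j(k_1,…,k_j)}, ζ_1 := x^{Z_{j-2}(k_2,…,k_{j-1})}·y^{Z_{j-1}(k_2,…,k_j)}, and inductively ζ_{i+1} := (ζ_i^{a_i} + t·ζ_i^{k_i}) / ζ_{i-1} for 1 ≤ i ≤ r. Define integers m_i^{(j)} := Z_{j-i-1}(k_{i+1},…,k_{j-1}) if i ≤ j and m_i^{(j)} := −Z_{i-j-1}(a_{j+1},…,a_{i-1}) if i > j. Then for each 1 ≤ i ≤ r+1 there exists a polynomial Q_i ∈ ℤ[t, x, y], not divisible by x, such that ζ_i = x^{m_i^{(j)}} · y^{m_i^{(j+1)}} · Q_i. -/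

import Mathlib

/-!
Write `ζ_i = x ^ m_i * y ^ m'_i * Q_i`. Since
`ζ_i ^ a_i + t ζ_i ^ k_i = ζ_i ^ k_i (ζ_i ^ (a_i - k_i) + t)`, the recurrence for `ζ` splits into
the tropical recurrence `m_{i+1} + m_{i-1} = min (k_i m_i) (a_i m_i)` for the exponents and
`Q_{i+1} Q_{i-1} = Q_i ^ k_i S_i`, where `S_i` is the polynomial numerator of
`x ^ (e m_i) y ^ (e m'_i) Q_i ^ e + t`, `e = a_i - k_i`.
The latter is solved by `Q_i = ∏_{l < i} S_l ^ Z(k_{l+1}, …, k_{i-1})`, a polynomial because every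
continuant of a proper window of an admissible tuple is positive: testing the positive semidefinite
form `M(k)` against the vector of continuants `(Z_{-1}, Z_0, …, Z_n)` gives `Z_n Z_{n+1} ≥ 0`.
Finally `m_l^{(j)}` is positive for `l < j`, zero for `l = j` and negative for `l > j`, so setting
`x = 0` in `S_l` leaves a nonzero polynomial, whence `x ∤ Q_i`.
-/

/-- Auxiliary: continuant computed from the *front* of the list; applied to the
reversed list it gives the continuant of the paper. -/
def Zrev {R : Type*} [CommRing R] : List R → R
  | [] => 1
  | [x] => x
  | x :: y :: l => x * Zrev (y :: l) - Zrev l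

/-- The continuant polynomial `Z_n(x_1,…,x_n)` (with `Z_{-1}=0`, `Z_0=1`) satisfying
`Z_n(x_1,…,x_n) = x_n·Z_{n-1}(x_1,…,x_{n-1}) - Z_{n-2}(x_1,…,x_{n-2})`. -/
def Zc {R : Type*} [CommRing R] (l : List R) : R := Zrev l.reverse

/-- The Hirzebruch–Jung continued fraction `[x_1,…,x_n] = x_1 - 1/[x_2,…,x_n]`. -/
noncomputable def hj {K : Type*} [Field K] : List K → K
  | [] => 0
  | [x] => x
  | x :: y :: l => x - 1 / hj (y :: l)

/-- The `n×n` tridiagonal matrix `M(x_1,…,x_n)` with diagonal entries `x_i`,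
entries `-1` immediately above and below the diagonal, `0` elsewhere. -/
def triMat {n : ℕ} {R : Type*} [CommRing R] (x : Fin n → R) :
    Matrix (Fin n) (Fin n) R :=
  Matrix.of fun i j =>
    if i = j then x i
    else if (i : ℕ) + 1 = (j : ℕ) ∨ (j : ℕ) + 1 = (i : ℕ) then -1 else 0

/-- A tuple `x ∈ ℕ^n` is admissible if `M(x)` is positive semidefinite of rank `≥ n-1`. -/
def Admissible {n : ℕ} (x : Fin n → ℕ) : Prop :=
  (triMat fun i => (x i : ℝ)).PosSemidef ∧ n - 1 ≤ (triMat fun i => (x i : ℝ)).rank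

section Continuant

variable {R : Type*} [CommRing R]

lemma Zrev_append_pair : ∀ (l : List R) (y x : R),
    Zrev (l ++ [y, x]) = x * Zrev (l ++ [y]) - Zrev l
  | [], y, x => by simp [Zrev]; ring
  | [z], y, x => by simp [Zrev]; ring
  | z :: w :: l, y, x => by
    have h₁ := Zrev_append_pair (w :: l) y x
    have h₂ := Zrev_append_pair l y x
    simp only [List.cons_append] at h₁ ⊢
    rw [Zrev, Zrev, h₁, h₂, Zrev]
    ring

lemma Zc_append_pair (l : List R) (y x : R) :
    Zc (l ++ [y, x]) = x * Zc (l ++ [y]) - Zc l := by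
  simp [Zc, Zrev]

lemma Zc_cons_cons (x y : R) (l : List R) : Zc (x :: y :: l) = x * Zc (y :: l) - Zc l := by
  simpa [Zc] using Zrev_append_pair l.reverse y x

lemma Zrev_map {S : Type*} [CommRing S] (φ : R →+* S) : ∀ l : List R, Zrev (l.map φ) = φ (Zrev l)
  | [] => by simp [Zrev]
  | [x] => by simp [Zrev]
  | x :: y :: l => by
    have h₁ := Zrev_map φ (y :: l)
    have h₂ := Zrev_map φ l
    simp only [List.map_cons] at h₁ ⊢
    rw [Zrev, Zrev, h₁, h₂, map_sub, map_mul]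

/-- `Zpred f s n = Z_{n-1}(f s, …, f (s + n - 2))`, with the convention `Z_{-1} = 0`. -/
def Zpred (f : ℕ → R) (s : ℕ) : ℕ → R
  | 0 => 0
  | n + 1 => Zc ((List.range' s n).map f)

variable (f : ℕ → R) (s n : ℕ)

@[simp] lemma Zpred_zero : Zpred f s 0 = 0 := rfl

@[simp] lemma Zpred_one : Zpred f s 1 = 1 := rfl

lemma Zpred_succ_succ : Zpred f s (n + 2) = f (s + n) * Zpred f s (n + 1) - Zpred f s n := by
  cases n with
  | zero => simp [Zpred, Zc, Zrev]
  | succ n =>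
    simp only [Zpred, List.range'_1_concat, List.map_append, List.append_assoc]
    simpa [add_assoc] using Zc_append_pair ((List.range' s n).map f) (f (s + n)) (f (s + (n + 1)))

lemma Zpred_succ_succ' : Zpred f s (n + 2) = f s * Zpred f (s + 1) (n + 1) - Zpred f (s + 2) n := by
  cases n with
  | zero => simp [Zpred, Zc, Zrev]
  | succ n => simp [Zpred, List.range'_succ, Zc_cons_cons]

lemma Zpred_map {S : Type*} [CommRing S] (φ : R →+* S) : Zpred (φ ∘ f) s n = φ (Zpred f s n) := by
  cases n with
  | zero => simp
  | succ n => simp [Zpred, Zc, ← List.map_map, ← List.map_reverse, Zrev_map]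

end Continuant

section Positivity

open Matrix

lemma Zpred_nonneg_and_lt_succ (f : ℕ → ℤ) (s : ℕ) : ∀ n, (∀ l, s ≤ l → l < s + n → 2 ≤ f l) →
    0 ≤ Zpred f s n ∧ Zpred f s n < Zpred f s (n + 1) := by
  intro n
  induction n with
  | zero => simp
  | succ n ih =>
    intro hf
    obtain ⟨h₀, h₁⟩ := ih fun l hl hl' => hf l hl (by omega)
    have h₂ := hf (s + n) (by omega) (by omega)
    rw [Zpred_succ_succ]
    constructor <;> nlinarith

lemma triMat_submatrix {R : Type*} [CommRing R] {m n : ℕ} (x : Fin n → R) (e : Fin m → Fin n)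
    (s : ℕ) (he : ∀ i, (e i : ℕ) = s + i) : (triMat x).submatrix e e = triMat (x ∘ e) := by
  ext i j
  simp only [triMat, submatrix_apply, of_apply, Function.comp_apply, Fin.ext_iff, he]
  congr 1
  · simp
  · congr 1; simp only [eq_iff_iff]; omega

lemma triMat_mulVec_apply {R : Type*} [CommRing R] {n : ℕ} (x v : ℕ → R) (i : Fin n) :
    (triMat (fun i : Fin n => x i) *ᵥ fun j => v j) i = x i * v i -
      (if (i : ℕ) + 1 < n then v (i + 1) else 0) - (if (i : ℕ) = 0 then 0 else v (i - 1)) := by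
  have hterm : ∀ j : ℕ, (if (i : ℕ) = j then x i else
      if (i : ℕ) + 1 = j ∨ j + 1 = (i : ℕ) then -1 else 0) * v j =
      (if j = i then x i * v j else 0) - (if j = i + 1 then v j else 0) -
        (if (i : ℕ) = 0 then 0 else if j = i - 1 then v j else 0) := by
    intro j
    split_ifs <;> first | omega | ring
  simp only [mulVec, dotProduct, triMat, of_apply, Fin.ext_iff]
  rw [Fin.sum_univ_eq_sum_range (fun j => (if (i : ℕ) = j then x i else
      if (i : ℕ) + 1 = j ∨ j + 1 = (i : ℕ) then -1 else 0) * v j) n]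
  simp only [hterm, Finset.sum_sub_distrib, Finset.sum_ite_eq', Finset.mem_range, i.isLt]
  have := i.isLt
  split_ifs <;> simp <;> omega

lemma triMat_mulVec_Zpred (x : ℕ → ℝ) (s n : ℕ) :
    triMat (fun i : Fin (n + 2) => x (s + i)) *ᵥ (fun i => Zpred x (s + 1) i) =
      Pi.single (Fin.last (n + 1)) (Zpred x (s + 1) (n + 2)) - Pi.single 0 1 := by
  ext i
  rw [triMat_mulVec_apply (fun l => x (s + l)) (Zpred x (s + 1))]
  rcases i with ⟨_ | m, hm⟩
  · simp
  · have hrec := Zpred_succ_succ x (s + 1) m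
    rw [show s + 1 + m = s + (m + 1) by ring] at hrec
    by_cases hlast : m = n
    · subst hlast
      simp [Fin.last, hrec]
    · have hne : (⟨m + 1, hm⟩ : Fin (n + 2)) ≠ Fin.last (n + 1) := by
        simp [Fin.ext_iff]; omega
      simp [hne, show m + 1 + 1 < n + 2 by omega, hrec]

lemma Zpred_pos_of_posSemidef (x : ℕ → ℝ) (s : ℕ) :
    ∀ n, (triMat fun i : Fin (n + 1) => x (s + i)).PosSemidef → 0 < Zpred x (s + 1) (n + 1) := by
  intro n
  induction n with
  | zero => simp
  | succ n ih =>
    intro hM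
    have hP : 0 < Zpred x (s + 1) (n + 1) := by
      have hsub := hM.submatrix Fin.castSucc
      rw [triMat_submatrix _ _ 0 (by simp)] at hsub
      exact ih hsub
    set w : Fin (n + 2) → ℝ := fun i => Zpred x (s + 1) i
    have hdot : star w ⬝ᵥ (triMat (fun i : Fin (n + 2) => x (s + i)) *ᵥ w) =
        Zpred x (s + 1) (n + 1) * Zpred x (s + 1) (n + 2) := by
      simp [w, triMat_mulVec_Zpred, dotProduct_sub]
    have hZ : 0 ≤ Zpred x (s + 1) (n + 2) :=
      nonneg_of_mul_nonneg_right (hdot ▸ hM.dotProduct_mulVec_nonneg w) hP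
    refine hZ.lt_of_ne fun hZ0 => ?_
    have hker := (hM.dotProduct_mulVec_zero_iff w).1 (by rw [hdot, ← hZ0, mul_zero])
    simpa [w, triMat_mulVec_Zpred] using congrFun hker 0

lemma Zpred_pos_of_admissible {r : ℕ} {k : ℕ → ℕ} (hadm : Admissible fun i : Fin r => k (i.1 + 1))
    {s n : ℕ} (hs : 2 ≤ s) (hsn : s + n ≤ r + 1) : 0 < Zpred (fun l => (k l : ℤ)) s (n + 1) := by
  obtain ⟨s, rfl⟩ : ∃ s', s = s' + 2 := ⟨s - 2, by omega⟩
  have hsub := hadm.1.submatrix fun i : Fin (n + 1) => (⟨s + i, by omega⟩ : Fin r)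
  rw [triMat_submatrix _ _ s fun _ => rfl] at hsub
  have hpos := Zpred_pos_of_posSemidef (fun l => (k l : ℝ)) (s + 1) n
    (by simpa only [Function.comp_def, add_right_comm] using hsub)
  have hcast := Zpred_map (fun l => (k l : ℤ)) (s + 2) (n + 1) (Int.castRingHom ℝ)
  simp only [Function.comp_def, eq_intCast, Int.cast_natCast] at hcast
  exact_mod_cast hcast ▸ hpos

lemma Zpred_nonneg_of_admissible {r : ℕ} {k : ℕ → ℕ}
    (hadm : Admissible fun i : Fin r => k (i.1 + 1)) {s n : ℕ} (hs : 2 ≤ s) (hsn : s + n ≤ r + 2) :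
    0 ≤ Zpred (fun l => (k l : ℤ)) s n := by
  cases n with
  | zero => rfl
  | succ n => exact (Zpred_pos_of_admissible hadm hs (by omega)).le

end Positivity

section Exponents

variable (k a : ℕ → ℕ)

/-- `mExp k a jj i` is the exponent `m_i^{(jj)}` of the statement. -/
def mExp (jj i : ℕ) : ℤ :=
  if i ≤ jj then Zpred (fun l => (k l : ℤ)) (i + 1) (jj - i)
  else -Zpred (fun l => (a l : ℤ)) (jj + 1) (i - jj)

variable {k a}

lemma mExp_eq_ite (jj i : ℕ) : mExp k a jj i =
    if i ≤ jj then
      (if i = jj then 0 else Zc ((List.range' (i + 1) (jj - i - 1)).map fun l => (k l : ℤ)))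
    else -Zc ((List.range' (jj + 1) (i - jj - 1)).map fun l => (a l : ℤ)) := by
  unfold mExp
  split_ifs with h₁ h₂
  · subst h₂; simp
  · rw [show jj - i = jj - i - 1 + 1 by omega]; rfl
  · rw [show i - jj = i - jj - 1 + 1 by omega]; rfl

lemma mExp_of_ge {jj i : ℕ} (h : jj ≤ i) :
    mExp k a jj i = -Zpred (fun l => (a l : ℤ)) (jj + 1) (i - jj) := by
  unfold mExp
  split_ifs with h'
  · simp [show i = jj by omega]
  · rfl

@[simp] lemma mExp_self (jj : ℕ) : mExp k a jj jj = 0 := by simp [mExp]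

@[simp] lemma mExp_succ_self (jj : ℕ) : mExp k a (jj + 1) jj = 1 := by simp [mExp]

lemma mExp_rec_of_le {jj i : ℕ} (hi : 1 ≤ i) (h : i ≤ jj) :
    mExp k a jj (i + 1) + mExp k a jj (i - 1) = k i * mExp k a jj i := by
  rcases h.lt_or_eq with h | rfl
  · obtain ⟨n, rfl⟩ : ∃ n, jj = i + 1 + n := ⟨jj - i - 1, by omega⟩
    simp only [mExp, if_pos h.le, if_pos (show i + 1 ≤ i + 1 + n by omega),
      if_pos (show i - 1 ≤ i + 1 + n by omega)]
    rw [show i + 1 + n - (i + 1) = n by omega, show i + 1 + n - (i - 1) = n + 2 by omega,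
      show i + 1 + n - i = n + 1 by omega, show i - 1 + 1 = i by omega, Zpred_succ_succ']
    ring
  · rw [mExp_of_ge (by omega), mExp, if_pos (by omega)]
    simp [show i - (i - 1) = 1 by omega]

lemma mExp_rec_of_gt {jj i : ℕ} (h : jj < i) :
    mExp k a jj (i + 1) + mExp k a jj (i - 1) = a i * mExp k a jj i := by
  obtain ⟨n, rfl⟩ : ∃ n, i = jj + 1 + n := ⟨i - jj - 1, by omega⟩
  rw [mExp_of_ge (by omega), mExp_of_ge (by omega), mExp_of_ge (by omega),
    show jj + 1 + n + 1 - jj = n + 2 by omega, show jj + 1 + n - 1 - jj = n by omega,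
    show jj + 1 + n - jj = n + 1 by omega, Zpred_succ_succ]
  ring

lemma mExp_zero {jj : ℕ} (h : 1 ≤ jj) :
    mExp k a jj 0 = Zc ((List.range' 1 (jj - 1)).map fun l => (k l : ℤ)) := by
  obtain ⟨n, rfl⟩ : ∃ n, jj = n + 1 := ⟨jj - 1, by omega⟩
  rfl

lemma mExp_one {jj : ℕ} (h : 1 ≤ jj) :
    mExp k a jj 1 = if jj = 1 then 0 else Zc ((List.range' 2 (jj - 2)).map fun l => (k l : ℤ)) := by
  obtain ⟨n, rfl⟩ : ∃ n, jj = n + 1 := ⟨jj - 1, by omega⟩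
  cases n <;> rfl

variable {r : ℕ}

lemma mExp_pos (hadm : Admissible fun i : Fin r => k (i.1 + 1)) {jj i : ℕ} (hi : 1 ≤ i)
    (h : i < jj) (hjj : jj ≤ r + 1) : 0 < mExp k a jj i := by
  rw [mExp, if_pos h.le, show jj - i = jj - i - 1 + 1 by omega]
  exact Zpred_pos_of_admissible hadm (by omega) (by omega)

lemma mExp_neg (ha : ∀ i, 1 ≤ i → i ≤ r → 2 ≤ a i) {jj i : ℕ} (hjj : 1 ≤ jj) (h : jj < i)
    (hi : i ≤ r + 1) : mExp k a jj i < 0 := by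
  rw [mExp_of_ge h.le, neg_neg_iff_pos, show i - jj = i - jj - 1 + 1 by omega]
  obtain ⟨h₀, h₁⟩ := Zpred_nonneg_and_lt_succ (fun l => (a l : ℤ)) (jj + 1) (i - jj - 1)
    fun l hl hl' => by exact_mod_cast ha l (by omega) (by omega)
  exact h₀.trans_lt h₁

lemma mExp_rec (hadm : Admissible fun i : Fin r => k (i.1 + 1))
    (ha : ∀ i, 1 ≤ i → i ≤ r → 2 ≤ a i) (hk : ∀ i, 1 ≤ i → i ≤ r → k i ≤ a i)
    {jj : ℕ} (hjj₁ : 1 ≤ jj) (hjj : jj ≤ r + 1) {i : ℕ} (hi₁ : 1 ≤ i) (hi : i ≤ r) :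
    mExp k a jj (i + 1) + mExp k a jj (i - 1) =
      min (k i * mExp k a jj i) (a i * mExp k a jj i) := by
  have hka : (k i : ℤ) ≤ a i := by exact_mod_cast hk i hi₁ hi
  rcases lt_or_ge jj i with h | h
  · rw [mExp_rec_of_gt h, min_eq_right]
    exact mul_le_mul_of_nonpos_right hka (mExp_neg ha hjj₁ h (by omega)).le
  · rw [mExp_rec_of_le hi₁ h, min_eq_left]
    refine mul_le_mul_of_nonneg_right hka ?_
    rcases h.lt_or_eq with h | rfl
    · exact (mExp_pos hadm hi₁ h hjj).le
    · simp

lemma mExp_sign (hadm : Admissible fun i : Fin r => k (i.1 + 1))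
    (ha : ∀ i, 1 ≤ i → i ≤ r → 2 ≤ a i) {j : ℕ} (hj₁ : 1 ≤ j) (hj : j ≤ r) (l : ℕ) (hl₁ : 1 ≤ l)
    (hl : l ≤ r) :
    0 < mExp k a j l ∨ mExp k a j l < 0 ∨ mExp k a j l = 0 ∧ mExp k a (j + 1) l = 1 := by
  rcases lt_trichotomy l j with h | rfl | h
  · exact Or.inl (mExp_pos hadm hl₁ h (by omega))
  · simp
  · exact Or.inr (Or.inl (mExp_neg ha hj₁ h (by omega)))

end Exponents

section Exchange

def laurentNumer {R : Type*} [CommRing R] (t x y : R) (u v : ℤ) (P : R) : R :=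
  x ^ u.toNat * y ^ v.toNat * P + t * x ^ (-u).toNat * y ^ (-v).toNat

lemma map_laurentNumer {R S : Type*} [CommRing R] [CommRing S] (φ : R →+* S) (t x y : R)
    (u v : ℤ) (P : R) :
    φ (laurentNumer t x y u v P) = laurentNumer (φ t) (φ x) (φ y) u v (φ P) := by
  simp [laurentNumer]

variable {K : Type*} [Field K] {t x y : K}

lemma laurentNumer_eq (hx : x ≠ 0) (hy : y ≠ 0) (u v : ℤ) (P : K) :
    laurentNumer t x y u v P = x ^ (-u).toNat * y ^ (-v).toNat * (x ^ u * y ^ v * P + t) := by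
  have hcancel : ∀ z : K, z ≠ 0 → ∀ w : ℤ, z ^ (-w).toNat * z ^ w = z ^ w.toNat := by
    intro z hz w
    calc z ^ (-w).toNat * z ^ w = z ^ (-w).toNat * z ^ ((w.toNat : ℤ) - (-w).toNat) := by
          rw [Int.toNat_sub_toNat_neg]
      _ = z ^ w.toNat := by
          rw [zpow_sub₀ hz, zpow_natCast, zpow_natCast]
          field_simp
  rw [laurentNumer, ← hcancel x hx u, ← hcancel y hy v]
  ring

lemma min_mul_eq_sub_toNat {k a : ℕ} (hka : k ≤ a) (μ : ℤ) :
    min (k * μ) (a * μ) = k * μ - (-((a - k : ℕ) * μ)).toNat := by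
  have : (a : ℤ) * μ = k * μ + (a - k : ℕ) * μ := by push_cast [hka]; ring
  rw [this]
  omega

lemma exchange_step (hx : x ≠ 0) (hy : y ≠ 0) {k a : ℕ} (hka : k ≤ a) {μ₀ μ₁ μ₂ ν₀ ν₁ ν₂ : ℤ}
    (hμ : μ₂ + μ₀ = min (k * μ₁) (a * μ₁)) (hν : ν₂ + ν₀ = min (k * ν₁) (a * ν₁))
    {Q₀ Q₁ Q₂ : K} (hQ₀ : Q₀ ≠ 0)
    (hQ : Q₂ * Q₀ = Q₁ ^ k *
      laurentNumer t x y ((a - k : ℕ) * μ₁) ((a - k : ℕ) * ν₁) (Q₁ ^ (a - k))) :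
    ((x ^ μ₁ * y ^ ν₁ * Q₁) ^ a + t * (x ^ μ₁ * y ^ ν₁ * Q₁) ^ k) / (x ^ μ₀ * y ^ ν₀ * Q₀) =
      x ^ μ₂ * y ^ ν₂ * Q₂ := by
  rw [min_mul_eq_sub_toNat hka] at hμ hν
  rw [laurentNumer_eq hx hy] at hQ
  have hpow : ∀ (n : ℕ), (x ^ μ₁ * y ^ ν₁ * Q₁) ^ n = x ^ (n * μ₁) * y ^ (n * ν₁) * Q₁ ^ n := by
    intro n
    rw [mul_pow, mul_pow, ← zpow_natCast, ← zpow_natCast, ← zpow_mul, ← zpow_mul, mul_comm μ₁,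
      mul_comm ν₁]
  obtain ⟨e, rfl⟩ : ∃ e, a = k + e := ⟨a - k, by omega⟩
  rw [Nat.add_sub_cancel_left] at hμ hν hQ
  rw [div_eq_iff (by simp [zpow_ne_zero, hx, hy, hQ₀]), pow_add]
  calc _ = (x ^ μ₁ * y ^ ν₁ * Q₁) ^ k * ((x ^ μ₁ * y ^ ν₁ * Q₁) ^ e + t) := by ring
    _ = x ^ (μ₂ + μ₀) * y ^ (ν₂ + ν₀) * (Q₂ * Q₀) := by
      rw [hμ, hν, hQ, hpow, hpow, zpow_sub₀ hx, zpow_sub₀ hy, zpow_natCast, zpow_natCast]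
      field_simp
    _ = _ := by rw [zpow_add₀ hx, zpow_add₀ hy]; ring

theorem eq_zpow_mul_zpow_mul_of_exchange (hx : x ≠ 0) (hy : y ≠ 0) {r : ℕ} {a k : ℕ → ℕ}
    (hk : ∀ i, 1 ≤ i → i ≤ r → k i ≤ a i) {μ ν : ℕ → ℤ}
    (hμ : ∀ i, 1 ≤ i → i ≤ r → μ (i + 1) + μ (i - 1) = min (k i * μ i) (a i * μ i))
    (hν : ∀ i, 1 ≤ i → i ≤ r → ν (i + 1) + ν (i - 1) = min (k i * ν i) (a i * ν i))
    {Q : ℕ → K} (hQ₀ : ∀ i, i < r → Q i ≠ 0)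
    (hQ : ∀ i, 1 ≤ i → i ≤ r → Q (i + 1) * Q (i - 1) = Q i ^ k i *
      laurentNumer t x y ((a i - k i : ℕ) * μ i) ((a i - k i : ℕ) * ν i) (Q i ^ (a i - k i)))
    {ζ : ℕ → K} (h₀ : ζ 0 = x ^ μ 0 * y ^ ν 0 * Q 0) (h₁ : ζ 1 = x ^ μ 1 * y ^ ν 1 * Q 1)
    (hrec : ∀ i, 1 ≤ i → i ≤ r → ζ (i + 1) = (ζ i ^ a i + t * ζ i ^ k i) / ζ (i - 1)) :
    ∀ i, i ≤ r + 1 → ζ i = x ^ μ i * y ^ ν i * Q i := by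
  intro i
  induction i using Nat.strong_induction_on with
  | _ i ih =>
    intro hi
    match i with
    | 0 => exact h₀
    | 1 => exact h₁
    | i + 2 =>
      rw [hrec (i + 1) (by omega) (by omega), ih (i + 1) (by omega) (by omega),
        Nat.add_sub_cancel, ih i (by omega) (by omega)]
      exact exchange_step hx hy (hk _ (by omega) (by omega)) (hμ _ (by omega) (by omega))
        (hν _ (by omega) (by omega)) (hQ₀ i (by omega)) (hQ _ (by omega) (by omega))

end Exchange

section ExchangePoly
open MvPolynomial

def qExp (k : ℕ → ℕ) (l i : ℕ) : ℕ := (Zpred (fun n => (k n : ℤ)) (l + 1) (i - l)).toNat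

variable (k a : ℕ → ℕ) (μ ν : ℕ → ℤ)

/-- The polynomial `S_i`; `Q_i` is written out as a product over `l < i` so that the recursion is
well founded. -/
noncomputable def exchangePoly (i : ℕ) : MvPolynomial (Fin 3) ℤ :=
  laurentNumer (X 0) (X 1) (X 2) ((a i - k i : ℕ) * μ i) ((a i - k i : ℕ) * ν i)
    ((∏ l ∈ (Finset.Ico 1 i).attach, exchangePoly l.1 ^ qExp k l.1 i) ^ (a i - k i))
termination_by i
decreasing_by exact (Finset.mem_Ico.mp l.2).2

noncomputable def zetaPoly (i : ℕ) : MvPolynomial (Fin 3) ℤ :=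
  ∏ l ∈ Finset.Ico 1 i, exchangePoly k a μ ν l ^ qExp k l i

lemma exchangePoly_eq (i : ℕ) : exchangePoly k a μ ν i =
    laurentNumer (X 0) (X 1) (X 2) ((a i - k i : ℕ) * μ i) ((a i - k i : ℕ) * ν i)
      (zetaPoly k a μ ν i ^ (a i - k i)) := by
  rw [exchangePoly, zetaPoly,
    Finset.prod_attach (Finset.Ico 1 i) fun l => exchangePoly k a μ ν l ^ qExp k l i]

@[simp] lemma zetaPoly_zero : zetaPoly k a μ ν 0 = 1 := by simp [zetaPoly]

@[simp] lemma zetaPoly_one : zetaPoly k a μ ν 1 = 1 := by simp [zetaPoly]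

lemma zetaPoly_eq_prod {i N : ℕ} (h : i ≤ N) :
    zetaPoly k a μ ν i = ∏ l ∈ Finset.Ico 1 N, exchangePoly k a μ ν l ^ qExp k l i := by
  refine Finset.prod_subset (Finset.Ico_subset_Ico_right h) fun l hl hli => ?_
  rw [qExp, show i - l = 0 by simp at hl hli; omega, Zpred_zero, Int.toNat_zero, pow_zero]

variable {k} {r : ℕ}

lemma qExp_rec (hadm : Admissible fun i : Fin r => k (i.1 + 1)) {l i : ℕ} (hl : 1 ≤ l)
    (hli : l ≤ i) (hi : i ≤ r) :
    qExp k l (i + 1) + qExp k l (i - 1) = k i * qExp k l i + if i = l then 1 else 0 := by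
  rcases hli.lt_or_eq with hli | rfl
  · obtain ⟨n, rfl⟩ : ∃ n, i = l + 1 + n := ⟨i - l - 1, by omega⟩
    have hrec := Zpred_succ_succ (fun n => (k n : ℤ)) (l + 1) n
    have h₀ := Zpred_nonneg_of_admissible hadm (s := l + 1) (n := n) (by omega) (by omega)
    have h₁ := Zpred_nonneg_of_admissible hadm (s := l + 1) (n := n + 1) (by omega) (by omega)
    have h₂ := Zpred_nonneg_of_admissible hadm (s := l + 1) (n := n + 2) (by omega) (by omega)
    rw [if_neg (by omega), add_zero, qExp, qExp, qExp, show l + 1 + n + 1 - l = n + 2 by omega,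
      show l + 1 + n - 1 - l = n by omega, show l + 1 + n - l = n + 1 by omega]
    apply Nat.cast_injective (R := ℤ)
    push_cast
    rw [Int.toNat_of_nonneg h₀, Int.toNat_of_nonneg h₁, Int.toNat_of_nonneg h₂, hrec]
    ring
  · simp [qExp]

lemma zetaPoly_rec (hadm : Admissible fun i : Fin r => k (i.1 + 1)) {i : ℕ} (hi₁ : 1 ≤ i)
    (hi : i ≤ r) : zetaPoly k a μ ν (i + 1) * zetaPoly k a μ ν (i - 1) =
      zetaPoly k a μ ν i ^ k i * exchangePoly k a μ ν i := by
  classical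
  have hS : exchangePoly k a μ ν i =
      ∏ l ∈ Finset.Ico 1 (i + 1), exchangePoly k a μ ν l ^ if i = l then 1 else 0 := by
    rw [Finset.prod_pow_boole, if_pos (by simp; omega)]
  rw [zetaPoly_eq_prod k a μ ν le_rfl, zetaPoly_eq_prod k a μ ν (show i - 1 ≤ i + 1 by omega),
    zetaPoly_eq_prod k a μ ν (show i ≤ i + 1 by omega), hS, ← Finset.prod_mul_distrib,
    ← Finset.prod_pow, ← Finset.prod_mul_distrib]
  refine Finset.prod_congr rfl fun l hl => ?_
  rw [Finset.mem_Ico] at hl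
  rw [← pow_add, ← pow_mul, ← pow_add, qExp_rec hadm hl.1 (by omega) hi, mul_comm]

end ExchangePoly

section NotDvd
open MvPolynomial

noncomputable def evalX1Zero : MvPolynomial (Fin 3) ℤ →ₐ[ℤ] MvPolynomial (Fin 3) ℤ :=
  aeval (Function.update X 1 0)

@[simp] lemma evalX1Zero_X_zero : evalX1Zero (X 0) = X 0 := by simp [evalX1Zero]
@[simp] lemma evalX1Zero_X_one : evalX1Zero (X 1) = 0 := by simp [evalX1Zero]
@[simp] lemma evalX1Zero_X_two : evalX1Zero (X 2) = X 2 := by simp [evalX1Zero]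

lemma one_add_X_zero_ne_zero : (1 + X 0 : MvPolynomial (Fin 3) ℤ) ≠ 0 := fun h => by
  simpa using congrArg constantCoeff h

lemma X_two_pow_mul_add_X_zero_ne_zero {n : ℕ} (hn : n ≠ 0) (P : MvPolynomial (Fin 3) ℤ) :
    X 2 ^ n * P + X 0 ≠ 0 := fun h => by
  obtain ⟨m, rfl⟩ : ∃ m, n = m + 1 := ⟨n - 1, by omega⟩
  have hdvd : (X 2 : MvPolynomial (Fin 3) ℤ) ∣ X 0 := ⟨-(X 2 ^ m * P), by linear_combination h⟩
  simp [X_dvd_X] at hdvd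

variable (k a : ℕ → ℕ) {μ ν : ℕ → ℤ}

lemma evalX1Zero_zetaPoly_ne_zero_of_forall {i : ℕ}
    (h : ∀ l, 1 ≤ l → l < i → evalX1Zero (exchangePoly k a μ ν l) ≠ 0) :
    evalX1Zero (zetaPoly k a μ ν i) ≠ 0 := by
  rw [zetaPoly, map_prod, Finset.prod_ne_zero_iff]
  intro l hl
  rw [Finset.mem_Ico] at hl
  exact map_pow evalX1Zero _ _ ▸ pow_ne_zero _ (h l hl.1 hl.2)

variable {r : ℕ}

lemma evalX1Zero_exchangePoly_ne_zero
    (hsign : ∀ l, 1 ≤ l → l ≤ r → 0 < μ l ∨ μ l < 0 ∨ μ l = 0 ∧ ν l = 1) :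
    ∀ l, 1 ≤ l → l ≤ r → evalX1Zero (exchangePoly k a μ ν l) ≠ 0 := by
  intro l
  induction l using Nat.strong_induction_on with
  | _ l ih =>
    intro hl₁ hl
    have hQ := evalX1Zero_zetaPoly_ne_zero_of_forall k a fun l' h₁ h₂ => ih l' h₂ h₁ (by omega)
    rw [exchangePoly_eq, laurentNumer]
    simp only [map_add, map_mul, map_pow, evalX1Zero_X_zero, evalX1Zero_X_one, evalX1Zero_X_two]
    rcases Nat.eq_zero_or_pos (a l - k l) with he | he
    · simpa [he] using one_add_X_zero_ne_zero
    have he' : (0 : ℤ) < (a l - k l : ℕ) := by exact_mod_cast he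
    rcases hsign l hl₁ hl with hμ | hμ | ⟨hμ, hν⟩
    · have hpos := mul_pos he' hμ
      have : ((a l - k l : ℕ) * μ l).toNat ≠ 0 := by omega
      simp [zero_pow this, hpos.le]
    · have hneg := mul_neg_of_pos_of_neg he' hμ
      have : (-((a l - k l : ℕ) * μ l)).toNat ≠ 0 := by omega
      simp [zero_pow this, hneg.le, hQ]
    · simpa [hμ, hν] using X_two_pow_mul_add_X_zero_ne_zero he.ne' _

lemma evalX1Zero_zetaPoly_ne_zero
    (hsign : ∀ l, 1 ≤ l → l ≤ r → 0 < μ l ∨ μ l < 0 ∨ μ l = 0 ∧ ν l = 1) {i : ℕ}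
    (hi : i ≤ r + 1) : evalX1Zero (zetaPoly k a μ ν i) ≠ 0 :=
  evalX1Zero_zetaPoly_ne_zero_of_forall k a fun l hl₁ hl =>
    evalX1Zero_exchangePoly_ne_zero k a hsign l hl₁ (by omega)

lemma not_X_one_dvd_zetaPoly
    (hsign : ∀ l, 1 ≤ l → l ≤ r → 0 < μ l ∨ μ l < 0 ∨ μ l = 0 ∧ ν l = 1) {i : ℕ}
    (hi : i ≤ r + 1) : ¬ X 1 ∣ zetaPoly k a μ ν i := fun ⟨c, hc⟩ =>
  evalX1Zero_zetaPoly_ne_zero k a hsign hi (by simp [hc])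

lemma zetaPoly_ne_zero
    (hsign : ∀ l, 1 ≤ l → l ≤ r → 0 < μ l ∨ μ l < 0 ∨ μ l = 0 ∧ ν l = 1) {i : ℕ}
    (hi : i ≤ r + 1) : zetaPoly k a μ ν i ≠ 0 := fun h =>
  not_X_one_dvd_zetaPoly k a hsign hi (h ▸ dvd_zero _)

end NotDvd

theorem zeta_eq_monomial_mul_Q_general (r : ℕ) (a k : ℕ → ℕ)
    (ha : ∀ i, 1 ≤ i → i ≤ r → 2 ≤ a i)
    (hk : ∀ i, 1 ≤ i → i ≤ r → k i ≤ a i)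
    (hadm : Admissible fun i : Fin r => k (i.1 + 1))
    (j : ℕ) (hj1 : 1 ≤ j) (hjr : j ≤ r)
    (m : ℕ → ℕ → ℤ)
    (hm : ∀ i jj, m i jj =
      if i ≤ jj then
        (if i = jj then 0
          else Zc ((List.range' (i + 1) (jj - i - 1)).map fun l => (k l : ℤ)))
      else -Zc ((List.range' (jj + 1) (i - jj - 1)).map fun l => (a l : ℤ)))
    (ζ : ℕ → FractionRing (MvPolynomial (Fin 3) ℤ))
    (hζ0 : ζ 0 =
      algebraMap (MvPolynomial (Fin 3) ℤ) (FractionRing (MvPolynomial (Fin 3) ℤ))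
          (MvPolynomial.X 1) ^ Zc ((List.range' 1 (j - 1)).map fun l => (k l : ℤ)) *
        algebraMap (MvPolynomial (Fin 3) ℤ) (FractionRing (MvPolynomial (Fin 3) ℤ))
          (MvPolynomial.X 2) ^ Zc ((List.range' 1 j).map fun l => (k l : ℤ)))
    (hζ1 : ζ 1 =
      algebraMap (MvPolynomial (Fin 3) ℤ) (FractionRing (MvPolynomial (Fin 3) ℤ))
          (MvPolynomial.X 1) ^
            (if j = 1 then (0 : ℤ)
              else Zc ((List.range' 2 (j - 2)).map fun l => (k l : ℤ))) *
        algebraMap (MvPolynomial (Fin 3) ℤ) (FractionRing (MvPolynomial (Fin 3) ℤ))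
          (MvPolynomial.X 2) ^ Zc ((List.range' 2 (j - 1)).map fun l => (k l : ℤ)))
    (hζrec : ∀ i, 1 ≤ i → i ≤ r →
      ζ (i + 1) =
        (ζ i ^ a i +
            algebraMap (MvPolynomial (Fin 3) ℤ) (FractionRing (MvPolynomial (Fin 3) ℤ))
              (MvPolynomial.X 0) * ζ i ^ k i) / ζ (i - 1)) :
    ∀ i, 1 ≤ i → i ≤ r + 1 →
      ∃ Q : MvPolynomial (Fin 3) ℤ, ¬ MvPolynomial.X 1 ∣ Q ∧
        ζ i =
          algebraMap (MvPolynomial (Fin 3) ℤ) (FractionRing (MvPolynomial (Fin 3) ℤ))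
              (MvPolynomial.X 1) ^ m i j *
            algebraMap (MvPolynomial (Fin 3) ℤ) (FractionRing (MvPolynomial (Fin 3) ℤ))
              (MvPolynomial.X 2) ^ m i (j + 1) *
            algebraMap (MvPolynomial (Fin 3) ℤ) (FractionRing (MvPolynomial (Fin 3) ℤ)) Q := by
  intro i _ hi
  set A := algebraMap (MvPolynomial (Fin 3) ℤ) (FractionRing (MvPolynomial (Fin 3) ℤ))
  have hA : ∀ {P}, P ≠ 0 → A P ≠ 0 := (map_ne_zero_iff A (IsFractionRing.injective _ _)).2
  have hsign := mExp_sign hadm ha hj1 hjr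
  have hm' : ∀ i jj, m i jj = mExp k a jj i := fun i jj => (hm i jj).trans (mExp_eq_ite jj i).symm
  set Q := zetaPoly k a (mExp k a j) (mExp k a (j + 1))
  refine ⟨Q i, not_X_one_dvd_zetaPoly k a hsign hi, ?_⟩
  rw [hm', hm']
  refine eq_zpow_mul_zpow_mul_of_exchange (Q := fun i => A (Q i)) (hA (MvPolynomial.X_ne_zero 1))
    (hA (MvPolynomial.X_ne_zero 2)) hk (fun i h₁ h₂ => mExp_rec hadm ha hk hj1 (by omega) h₁ h₂)
    (fun i h₁ h₂ => mExp_rec hadm ha hk (by omega) (by omega) h₁ h₂)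
    (fun i hi => hA (zetaPoly_ne_zero k a hsign (by omega)))
    (fun i h₁ h₂ => by
      rw [← map_mul, zetaPoly_rec a _ _ hadm h₁ h₂, map_mul, map_pow, exchangePoly_eq,
        map_laurentNumer, map_pow])
    ?_ ?_ hζrec i hi
  · rw [hζ0, mExp_zero hj1, mExp_zero (by omega), Nat.add_sub_cancel]
    simp [Q]
  · rw [hζ1, mExp_one hj1, mExp_one (by omega), if_neg (show j + 1 ≠ 1 by omega),
      show j + 1 - 2 = j - 1 by omega]
    simp [Q]

/-- in the fraction field of `ℤ[t,x,y]` (here `t = X 0`, `x = X 1`, `y = X 2`),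
each `ζ_i` is `x^{m_i^{(j)}}·y^{m_i^{(j+1)}}·Q_i` with `Q_i` a polynomial not divisible
by `x`. -/
theorem zeta_eq_monomial_mul_Q (r : ℕ) (a k : ℕ → ℕ)
    (ha : ∀ i, 1 ≤ i → i ≤ r → 2 ≤ a i)
    (hk : ∀ i, 1 ≤ i → i ≤ r → k i ≤ a i)
    (hadm : Admissible fun i : Fin r => k (i.1 + 1))
    (hk0 : Zc ((List.range' 1 r).map fun i => (k i : ℤ)) = 0)
    (j : ℕ) (hj1 : 1 ≤ j) (hjr : j ≤ r)
    (m : ℕ → ℕ → ℤ)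
    (hm : ∀ i jj, m i jj =
      if i ≤ jj then
        (if i = jj then 0
          else Zc ((List.range' (i + 1) (jj - i - 1)).map fun l => (k l : ℤ)))
      else -Zc ((List.range' (jj + 1) (i - jj - 1)).map fun l => (a l : ℤ)))
    (ζ : ℕ → FractionRing (MvPolynomial (Fin 3) ℤ))
    (hζ0 : ζ 0 =
      algebraMap (MvPolynomial (Fin 3) ℤ) (FractionRing (MvPolynomial (Fin 3) ℤ))
          (MvPolynomial.X 1) ^ Zc ((List.range' 1 (j - 1)).map fun l => (k l : ℤ)) *
        algebraMap (MvPolynomial (Fin 3) ℤ) (FractionRing (MvPolynomial (Fin 3) ℤ))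
          (MvPolynomial.X 2) ^ Zc ((List.range' 1 j).map fun l => (k l : ℤ)))
    (hζ1 : ζ 1 =
      algebraMap (MvPolynomial (Fin 3) ℤ) (FractionRing (MvPolynomial (Fin 3) ℤ))
          (MvPolynomial.X 1) ^
            (if j = 1 then (0 : ℤ)
              else Zc ((List.range' 2 (j - 2)).map fun l => (k l : ℤ))) *
        algebraMap (MvPolynomial (Fin 3) ℤ) (FractionRing (MvPolynomial (Fin 3) ℤ))
          (MvPolynomial.X 2) ^ Zc ((List.range' 2 (j - 1)).map fun l => (k l : ℤ)))
    (hζrec : ∀ i, 1 ≤ i → i ≤ r →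
      ζ (i + 1) =
        (ζ i ^ a i +
            algebraMap (MvPolynomial (Fin 3) ℤ) (FractionRing (MvPolynomial (Fin 3) ℤ))
              (MvPolynomial.X 0) * ζ i ^ k i) / ζ (i - 1)) :
    ∀ i, 1 ≤ i → i ≤ r + 1 →
      ∃ Q : MvPolynomial (Fin 3) ℤ, ¬ MvPolynomial.X 1 ∣ Q ∧
        ζ i =
          algebraMap (MvPolynomial (Fin 3) ℤ) (FractionRing (MvPolynomial (Fin 3) ℤ))
              (MvPolynomial.X 1) ^ m i j *
            algebraMap (MvPolynomial (Fin 3) ℤ) (FractionRing (MvPolynomial (Fin 3) ℤ))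
              (MvPolynomial.X 2) ^ m i (j + 1) *
            algebraMap (MvPolynomial (Fin 3) ℤ) (FractionRing (MvPolynomial (Fin 3) ℤ)) Q :=
  zeta_eq_monomial_mul_Q_general r a k ha hk hadm j hj1 hjr m hm ζ hζ0 hζ1 hζrec
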